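/- arXiv:2508.16393 — 2 statements merged into one kernel-verified Lean document; each statement's English description precedes it below -/
import Mathlib

section
/- Let p be an odd prime and c in ZMod p, and define φ(z) = z^(p-1) + c on ZMod p. Then the set {z ∈ ZMod p : φ(z) ≠ z and φ(φ(z)) = z} equals {0, -1} if c = -1, and is empty otherwise. In particular its cardinality is 2 when c = -1 and 0 for all other c. -/
theorem exact_period_two_set_pminus1 (p : ℕ) [Fact p.Prime] (hp : Odd p) (c : ZMod p) :
    (Finset.univ.filter (fun z : ZMod p =>
        z ^ (p - 1) + c ≠ z ∧ (z ^ (p - 1) + c) ^ (p - 1) + c = z)) =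
      (if c = -1 then ({0, -1} : Finset (ZMod p)) else ∅) ∧
    (Finset.univ.filter (fun z : ZMod p =>
        z ^ (p - 1) + c ≠ z ∧ (z ^ (p - 1) + c) ^ (p - 1) + c = z)).card =
      if c = -1 then 2 else 0 := by
  have hprime : p.Prime := Fact.out
  have hp1 : p - 1 ≠ 0 := by have := hprime.two_le; omega
  have hne : (-1 : ZMod p) ≠ 0 := by
    intro h
    have : (1 : ZMod p) = 0 := by linear_combination -h
    exact one_ne_zero this
  have hkey : ∀ z : ZMod p, z ≠ 0 → z ^ (p - 1) = 1 :=
    fun z hz => ZMod.pow_card_sub_one_eq_one hz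
  have hset : (Finset.univ.filter (fun z : ZMod p =>
        z ^ (p - 1) + c ≠ z ∧ (z ^ (p - 1) + c) ^ (p - 1) + c = z)) =
      (if c = -1 then ({0, -1} : Finset (ZMod p)) else ∅) := by
    ext z
    simp only [Finset.mem_filter, Finset.mem_univ, true_and]
    by_cases hz : z = 0
    · subst hz
      rw [zero_pow hp1, zero_add]
      by_cases hc : c = 0
      · subst hc
        simp [zero_pow hp1]
      · rw [hkey c hc]
        constructor
        · rintro ⟨h1, h2⟩
          have hc1 : c = -1 := by linear_combination h2
          simp [hc1]
        · intro h
          split_ifs at h with hc1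
          · subst hc1
            exact ⟨hne, by ring⟩
          · simp at h
    · rw [hkey z hz]
      by_cases hc : 1 + c = 0
      · rw [hc, zero_pow hp1, zero_add]
        have hc1 : c = -1 := by linear_combination hc
        subst hc1
        constructor
        · rintro ⟨h1, h2⟩
          simp [← h2]
        · intro h
          rw [if_pos rfl, Finset.mem_insert, Finset.mem_singleton] at h
          rcases h with h | h
          · exact absurd h hz
          · subst h
            exact ⟨fun h => hne h.symm, rfl⟩
      · rw [hkey _ hc]
        constructor
        · rintro ⟨h1, h2⟩
          exact absurd h2 h1
        · intro h
          split_ifs at h with hc1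
          · exact absurd (by rw [hc1]; ring) hc
          · simp at h
  refine ⟨hset, ?_⟩
  rw [hset]
  split_ifs with hc1
  · rw [Finset.card_insert_of_notMem (by simp [hne.symm]), Finset.card_singleton]
  · simp
end

section
/- Let F be a finite field of characteristic p (p odd) with n = [F : F_p] not divisible by p, and let c be the image in F of a nonzero element of ZMod p (i.e., c lies in the prime field and c ≠ 0). Then there is no z ∈ F with (z^p + c)^p + c = z. -/
theorem no_two_periodic_trace (F : Type*) [Field F] [Fintype F]
    (p : ℕ) [Fact p.Prime] (hp : Odd p) [CharP F p] [Algebra (ZMod p) F]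
    (hn : ¬ p ∣ Module.finrank (ZMod p) F)
    (c0 : ZMod p) (hc0 : c0 ≠ 0) (c : F) (hc : c = algebraMap (ZMod p) F c0) :
    ¬ ∃ z : F, (z ^ p + c) ^ p + c = z := by
  rintro ⟨z, hz⟩
  have hpp : p.Prime := Fact.out
  have hp2 : p ≠ 2 := by rintro rfl; exact absurd (Nat.odd_iff.mp hp) (by norm_num)
  haveI : PerfectRing F p := inferInstance
  let σ : F ≃ₐ[ZMod p] F := AlgEquiv.ofRingEquiv (f := frobeniusEquiv F p) (by
    intro x
    simp only [frobeniusEquiv_def]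
    rw [← map_pow, ZMod.pow_card])
  have htrace : ∀ x : F, Algebra.trace (ZMod p) F (x ^ p) = Algebra.trace (ZMod p) F x :=
    fun x => Algebra.trace_eq_of_algEquiv σ x
  have hcp : c ^ p = c := by rw [hc, ← map_pow, ZMod.pow_card]
  have key : (z ^ p) ^ p + c + c = z := by
    have hstep : (z ^ p + c) ^ p = (z ^ p) ^ p + c := by rw [add_pow_char, hcp]
    rw [← hstep]; exact hz
  have h2 : Algebra.trace (ZMod p) F c + Algebra.trace (ZMod p) F c = 0 := by
    have := congrArg (Algebra.trace (ZMod p) F) key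
    rw [map_add, map_add, htrace, htrace] at this
    linear_combination this
  rw [hc, Algebra.trace_algebraMap, nsmul_eq_mul] at h2
  have h2ne : (2 : ZMod p) ≠ 0 := by
    intro h
    have hdvd : p ∣ 2 := by
      rwa [show ((2:ZMod p)) = ((2:ℕ):ZMod p) by norm_num,
        ZMod.natCast_eq_zero_iff] at h
    exact hp2 ((Nat.prime_dvd_prime_iff_eq hpp Nat.prime_two).mp hdvd)
  have hfr : ((Module.finrank (ZMod p) F : ZMod p)) ≠ 0 := by
    rw [Ne, ZMod.natCast_eq_zero_iff]; exact hn
  have : (2 : ZMod p) * ((Module.finrank (ZMod p) F : ZMod p) * c0) = 0 := by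
    linear_combination h2
  exact mul_ne_zero h2ne (mul_ne_zero hfr hc0) this
end
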